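/- For every natural number n ≥ 1, I_{2n} = ∫₀^{π/2} x·cos^{2n}(x) dx = ((2n−1)!!/(2n)!!)·(π²/8) − ((2n−1)!!/(4·(2n)!!)) · ∑_{j=1}^{n} (1/j²)·((2j)!!/(2j−1)!!). -/

import Mathlib

/-! Integrating by parts against `d(cos^(m+1) x · sin x)` and using `sin² = 1 - cos²` gives
`(m + 2) I_{m+2} = (m + 1) I_m - 1/(m + 2)`, the boundary term coming from `x = 0`. For `m = 2n`,
since `r (n+1) = (2n+1)/(2n+2) · r n` with `r n = (2n-1)‼/(2n)‼`, this says
`I_{2n+2} / r (n+1) = I_{2n} / r n - 1/(4 (n+1)² r (n+1))`, which sums up from `I_0 = π²/8`. -/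

open Real Nat

lemma hasDerivAt_mul_cos_pow_mul_sin_add_cos_pow_div (m : ℕ) (x : ℝ) :
    HasDerivAt (fun x => x * cos x ^ (m + 1) * sin x + cos x ^ (m + 2) / ((m : ℝ) + 2))
      (((m : ℝ) + 2) * (x * cos x ^ (m + 2)) - ((m : ℝ) + 1) * (x * cos x ^ m)) x := by
  have hcos (k : ℕ) : HasDerivAt (fun x => cos x ^ (k + 1)) ((k + 1 : ℕ) * cos x ^ k * -sin x) x :=
    (hasDerivAt_cos x).fun_pow (k + 1)
  refine ((((hasDerivAt_id' x).fun_mul (hcos m)).fun_mul (hasDerivAt_sin x)).fun_add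
    ((hcos (m + 1)).div_const ((m : ℝ) + 2))).congr_deriv ?_
  have hm : (m : ℝ) + 2 ≠ 0 := by positivity
  field_simp
  push_cast
  linear_combination (-((m : ℝ) + 1) * ((m : ℝ) + 2) * x * cos x ^ m) * sin_sq_add_cos_sq x

theorem integral_mul_cos_pow_add_two (m : ℕ) :
    ((m : ℝ) + 2) * ∫ x in (0 : ℝ)..(π / 2), x * cos x ^ (m + 2) =
      ((m : ℝ) + 1) * (∫ x in (0 : ℝ)..(π / 2), x * cos x ^ m) - 1 / ((m : ℝ) + 2) := by
  have hFTC := intervalIntegral.integral_eq_sub_of_hasDerivAt (a := 0) (b := π / 2)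
    (fun x _ => hasDerivAt_mul_cos_pow_mul_sin_add_cos_pow_div m x)
    (by apply Continuous.intervalIntegrable; fun_prop)
  rw [intervalIntegral.integral_sub (by apply Continuous.intervalIntegrable; fun_prop)
      (by apply Continuous.intervalIntegrable; fun_prop),
    intervalIntegral.integral_const_mul, intervalIntegral.integral_const_mul] at hFTC
  simp only [cos_pi_div_two, sin_pi_div_two, cos_zero, sin_zero, zero_pow (succ_ne_zero _), one_pow,
    mul_zero, zero_mul, zero_div, add_zero, zero_add, zero_sub] at hFTC
  linarith

noncomputable def oddEvenDoubleFactorialRatio (n : ℕ) : ℝ := ((2 * n - 1)‼ : ℝ) / ((2 * n)‼ : ℝ)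

local notation "r" => oddEvenDoubleFactorialRatio

lemma oddEvenDoubleFactorialRatio_pos (n : ℕ) : 0 < r n := by
  unfold oddEvenDoubleFactorialRatio
  have := doubleFactorial_pos (2 * n - 1)
  have := doubleFactorial_pos (2 * n)
  positivity

lemma oddEvenDoubleFactorialRatio_succ (n : ℕ) :
    r (n + 1) = (2 * n + 1) / (2 * n + 2) * r n := by
  have hodd : (2 * (n + 1) - 1)‼ = (2 * n + 1) * (2 * n - 1)‼ := doubleFactorial_add_one (2 * n)
  have heven : (2 * (n + 1))‼ = (2 * n + 2) * (2 * n)‼ := doubleFactorial_add_two (2 * n)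
  have := doubleFactorial_pos (2 * n)
  simp only [oddEvenDoubleFactorialRatio, hodd, heven]
  push_cast
  field_simp

theorem integral_mul_cos_pow_two_mul (n : ℕ) :
    ∫ x in (0 : ℝ)..(π / 2), x * cos x ^ (2 * n) =
      r n * (π ^ 2 / 8 - (∑ j ∈ Finset.Icc 1 n, 1 / ((j : ℝ) ^ 2 * r j)) / 4) := by
  induction n with
  | zero => norm_num [oddEvenDoubleFactorialRatio, integral_id, div_pow]; ring
  | succ n ih =>
    have hrec := integral_mul_cos_pow_add_two (2 * n)
    rw [show 2 * n + 2 = 2 * (n + 1) by ring, ih] at hrec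
    have hr := oddEvenDoubleFactorialRatio_pos n
    rw [Finset.sum_Icc_succ_top (by omega), oddEvenDoubleFactorialRatio_succ]
    push_cast at hrec ⊢
    field_simp at hrec ⊢
    linear_combination hrec / 2

theorem stmt_5_general (n : ℕ) :
    ∫ x in (0:ℝ)..(π/2), x * cos x ^ (2 * n) =
      (((2*n - 1)‼ : ℝ) / ((2*n)‼ : ℝ)) * (π^2 / 8) -
      (((2*n - 1)‼ : ℝ) / (4 * ((2*n)‼ : ℝ))) *
        ∑ j ∈ Finset.Icc 1 n, (1 / (j:ℝ)^2) * (((2*j)‼ : ℝ) / ((2*j - 1)‼ : ℝ)) := by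
  rw [integral_mul_cos_pow_two_mul, mul_sub, Finset.sum_div, Finset.mul_sum, Finset.mul_sum]
  unfold oddEvenDoubleFactorialRatio
  congr 1
  refine Finset.sum_congr rfl fun j _ => ?_
  simp only [one_div, mul_inv, inv_div]
  ring

theorem stmt_5 (n : ℕ) (hn : 1 ≤ n) :
    ∫ x in (0:ℝ)..(π/2), x * cos x ^ (2 * n) =
      (((2*n - 1)‼ : ℝ) / ((2*n)‼ : ℝ)) * (π^2 / 8) -
      (((2*n - 1)‼ : ℝ) / (4 * ((2*n)‼ : ℝ))) *
        ∑ j ∈ Finset.Icc 1 n, (1 / (j:ℝ)^2) * (((2*j)‼ : ℝ) / ((2*j - 1)‼ : ℝ)) :=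
  stmt_5_general n
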